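/- arXiv:1609.04357 — 4 statements merged into one kernel-verified Lean document; each statement's English description precedes it below -/
import Mathlib

section
/- Let 0 < γ < 1 and let f : ℝ → ℝ be a Schwartz function. For every x ∈ ℝ, the integrals I_γ f(x) = ∫_ℝ (f(x) − f(y)) |x−y|^{−1−γ} dy and I_γ (f²)(x) = ∫_ℝ (f(x)² − f(y)²) |x−y|^{−1−γ} dy converge absolutely, and f(x) · I_γ f(x) ≥ (1/2) I_γ (f²)(x). -/
/-!
Pointwise, `a (a - b) - (a² - b²) / 2 = (a - b)² / 2 ≥ 0`, so the inequality follows by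
integrating against the positive kernel `|x - y| ^ (-(1 + γ))` once both integrals converge.
They do for every bounded Lipschitz `g`: then `|g x - g y| ≲ min |x - y| 1`, and
`min |t| 1 * |t| ^ (-(1 + γ))` is integrable on `ℝ` since `0 < γ < 1`. Both `f` and `f²` are
Schwartz functions, hence bounded and Lipschitz.
-/

open MeasureTheory Set

lemma integrable_min_abs_one_mul_abs_rpow {γ : ℝ} (hγ0 : 0 < γ) (hγ1 : γ < 1) :
    Integrable (fun t : ℝ => min |t| 1 * |t| ^ (-(1 + γ))) := by
  have hradial := integrable_fun_norm_addHaar (volume : Measure ℝ)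
    (f := fun r : ℝ => min r 1 * r ^ (-(1 + γ)))
  simp only [Real.norm_eq_abs, Module.finrank_self, tsub_self, pow_zero, one_smul] at hradial
  rw [hradial, ← Ioc_union_Ioi_eq_Ioi zero_le_one, integrableOn_union]
  constructor
  · have hnear : IntegrableOn (fun r : ℝ => r ^ (-γ)) (Ioc 0 1) := by
      rw [integrableOn_Ioc_iff_integrableOn_Ioo, intervalIntegral.integrableOn_Ioo_rpow_iff one_pos]
      linarith
    refine hnear.congr_fun (fun r hr => ?_) measurableSet_Ioc
    rw [min_eq_left hr.2, ← Real.rpow_one_add' hr.1.le (by intro h; linarith)]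
    ring_nf
  · have hfar : IntegrableOn (fun r : ℝ => r ^ (-(1 + γ))) (Ioi 1) :=
      (integrableOn_Ioi_rpow_iff one_pos).2 (by linarith)
    refine hfar.congr_fun (fun r hr => ?_) measurableSet_Ioi
    rw [min_eq_right hr.le, one_mul]

lemma LipschitzWith.abs_sub_le_mul_min_abs_sub_one {g : ℝ → ℝ} {L : NNReal} {M : ℝ}
    (hg : LipschitzWith L g) (hM : ∀ y, |g y| ≤ M) (x y : ℝ) :
    |g x - g y| ≤ max (L : ℝ) (2 * M) * min |x - y| 1 := by
  rcases le_total |x - y| 1 with h | h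
  · rw [min_eq_left h]
    calc |g x - g y| ≤ L * |x - y| := by simpa [Real.dist_eq] using hg.dist_le_mul x y
      _ ≤ _ := mul_le_mul_of_nonneg_right (le_max_left _ _) (abs_nonneg _)
  · rw [min_eq_right h, mul_one]
    calc |g x - g y| ≤ |g x| + |g y| := abs_sub _ _
      _ ≤ 2 * M := by linarith [hM x, hM y]
      _ ≤ _ := le_max_right _ _

theorem LipschitzWith.integrable_sub_mul_abs_sub_rpow {γ : ℝ} (hγ0 : 0 < γ) (hγ1 : γ < 1)
    {g : ℝ → ℝ} {L : NNReal} {M : ℝ} (hg : LipschitzWith L g) (hM : ∀ y, |g y| ≤ M)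
    (x : ℝ) :
    Integrable (fun y : ℝ => (g x - g y) * |x - y| ^ (-(1 + γ))) := by
  have hmajorant := ((integrable_min_abs_one_mul_abs_rpow hγ0 hγ1).comp_sub_left x).const_mul
    (max (L : ℝ) (2 * M))
  refine hmajorant.mono' (by have := hg.continuous.measurable; fun_prop) (ae_of_all _ fun y => ?_)
  rw [norm_mul, Real.norm_eq_abs, Real.norm_eq_abs,
    abs_of_nonneg (Real.rpow_nonneg (abs_nonneg _) _), ← mul_assoc]
  exact mul_le_mul_of_nonneg_right (hg.abs_sub_le_mul_min_abs_sub_one hM x y) (by positivity)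

theorem SchwartzMap.exists_lipschitzWith {E F : Type*} [NormedAddCommGroup E] [NormedSpace ℝ E]
    [NormedAddCommGroup F] [NormedSpace ℝ F] (f : SchwartzMap E F) :
    ∃ L, LipschitzWith L f := by
  refine ⟨(⟨_, apply_nonneg (SchwartzMap.seminorm ℝ 0 1) f⟩ : NNReal),
    lipschitzWith_of_nnnorm_fderiv_le (𝕜 := ℝ) f.differentiable fun x => ?_⟩
  change ‖fderiv ℝ f x‖ ≤ SchwartzMap.seminorm ℝ 0 1 f
  rw [← norm_iteratedFDeriv_one]
  exact f.norm_iteratedFDeriv_le_seminorm ℝ 1 x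

theorem SchwartzMap.integrable_sub_mul_abs_sub_rpow {γ : ℝ} (hγ0 : 0 < γ) (hγ1 : γ < 1)
    (f : SchwartzMap ℝ ℝ) (x : ℝ) :
    Integrable (fun y : ℝ => (f x - f y) * |x - y| ^ (-(1 + γ))) :=
  have ⟨_, hf⟩ := f.exists_lipschitzWith
  hf.integrable_sub_mul_abs_sub_rpow hγ0 hγ1 (f.norm_le_seminorm ℝ) x

lemma half_mul_sq_sub_sq_le_mul_sub (a b : ℝ) : 1 / 2 * (a ^ 2 - b ^ 2) ≤ a * (a - b) := by
  nlinarith [sq_nonneg (a - b)]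

/-- Pointwise inequality `f Λ^γ f ≥ (1/2) Λ^γ (f²)` for `0 < γ < 1` and `f` Schwartz,
where `I_γ g(x) = ∫ (g(x) − g(y)) |x−y|^{−1−γ} dy` is the (un-normalized) fractional
Laplacian, the integrals converging absolutely. -/
theorem pointwise_fractional_square (γ : ℝ) (hγ0 : 0 < γ) (hγ1 : γ < 1)
    (f : SchwartzMap ℝ ℝ) (x : ℝ) :
    Integrable (fun y : ℝ => (f x - f y) * |x - y| ^ (-(1 + γ))) ∧
    Integrable (fun y : ℝ => (f x ^ 2 - f y ^ 2) * |x - y| ^ (-(1 + γ))) ∧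
    (1 / 2) * (∫ y : ℝ, (f x ^ 2 - f y ^ 2) * |x - y| ^ (-(1 + γ))) ≤
      f x * ∫ y : ℝ, (f x - f y) * |x - y| ^ (-(1 + γ)) := by
  have hf := f.integrable_sub_mul_abs_sub_rpow hγ0 hγ1 x
  have hf2 : Integrable (fun y : ℝ => (f x ^ 2 - f y ^ 2) * |x - y| ^ (-(1 + γ))) := by
    simpa [f.hasTemperateGrowth, sq] using
      (SchwartzMap.smulLeftCLM ℝ f f).integrable_sub_mul_abs_sub_rpow hγ0 hγ1 x
  refine ⟨hf, hf2, ?_⟩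
  calc 1 / 2 * ∫ y, (f x ^ 2 - f y ^ 2) * |x - y| ^ (-(1 + γ))
      = ∫ y, 1 / 2 * (f x ^ 2 - f y ^ 2) * |x - y| ^ (-(1 + γ)) := by
        simp only [mul_assoc, integral_const_mul]
    _ ≤ ∫ y, f x * (f x - f y) * |x - y| ^ (-(1 + γ)) := by
        refine integral_mono ?_ ?_ fun y => mul_le_mul_of_nonneg_right
          (half_mul_sq_sub_sq_le_mul_sub (f x) (f y)) (by positivity)
        · simpa only [mul_assoc] using hf2.const_mul (1 / 2)
        · simpa only [mul_assoc] using hf.const_mul (f x)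
    _ = f x * ∫ y, (f x - f y) * |x - y| ^ (-(1 + γ)) := by
        simp only [mul_assoc, integral_const_mul]
end

section
/- Let 0 < γ < 1 and let f : ℝ → ℝ be a Schwartz function with f(x) ≥ 0 for all x ∈ ℝ. Then for every x ∈ ℝ, f(x)² · I_γ f(x) ≥ (1/3) I_γ (f³)(x), where I_γ g(x) = ∫_ℝ (g(x) − g(y)) |x−y|^{−1−γ} dy (both integrals converging absolutely). -/
/-!
For `a = f x ≥ 0` and `b = f y ≥ 0` one has
`a² (a - b) - (a³ - b³) / 3 = (a - b)² (2a + b) / 3 ≥ 0`, so the inequality already holds between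
the integrands, and integrating against the positive kernel `|x - y| ^ (-(1 + γ))` gives it for the
integrals. These converge because a bounded Lipschitz function `g` satisfies
`|g x - g y| ≤ C min 1 |x - y|`, and `min 1 |t| * |t| ^ (-(1 + γ))` is integrable for `0 < γ < 1`;
both `f` and `f³` are Schwartz functions, hence bounded and Lipschitz.
-/

open MeasureTheory Set NNReal
open scoped SchwartzMap

lemma integrable_comp_abs_of_integrableOn_Ioi {E : Type*} [NormedAddCommGroup E] {g : ℝ → E}
    (hg : IntegrableOn g (Ioi 0)) : Integrable (fun t => g |t|) := by
  have hIoi : IntegrableOn (fun t => g |t|) (Ioi 0) :=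
    hg.congr_fun (fun t ht => by rw [abs_of_pos ht]) measurableSet_Ioi
  have hIic : IntegrableOn (fun t => g |t|) (Iic 0) := by
    have hneg : MeasurableEmbedding fun t : ℝ => -t := (Homeomorph.neg ℝ).measurableEmbedding
    rw [← Measure.map_neg_eq_self (volume : Measure ℝ), hneg.integrableOn_map_iff]
    simp_rw [Function.comp_def, abs_neg, neg_preimage, neg_Iic, neg_zero]
    exact (integrableOn_Ici_iff_integrableOn_Ioi (by simp)).2 hIoi
  rw [← integrableOn_univ, ← Iic_union_Ioi (a := (0 : ℝ))]
  exact hIic.union hIoi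

lemma integrableOn_Ioi_min_one_mul_rpow {γ : ℝ} (hγ0 : 0 < γ) (hγ1 : γ < 1) :
    IntegrableOn (fun t : ℝ => min 1 t * t ^ (-(1 + γ))) (Ioi 0) := by
  have hIoc : IntegrableOn (fun t : ℝ => min 1 t * t ^ (-(1 + γ))) (Ioc 0 1) := by
    refine (((intervalIntegral.integrableOn_Ioo_rpow_iff one_pos).2 (by linarith : -γ > -1)
      ).congr_set_ae Ioo_ae_eq_Ioc.symm).congr_fun (fun t ⟨ht0, ht1⟩ => ?_) measurableSet_Ioc
    rw [min_eq_right ht1, ← Real.rpow_one_add' ht0.le (by linarith)]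
    ring_nf
  have hIoi : IntegrableOn (fun t : ℝ => min 1 t * t ^ (-(1 + γ))) (Ioi 1) :=
    (integrableOn_Ioi_rpow_of_lt (by linarith : -(1 + γ) < -1) one_pos).congr_fun
      (fun t ht => by rw [min_eq_left (le_of_lt ht), one_mul]) measurableSet_Ioi
  simpa [Ioc_union_Ioi_eq_Ioi zero_le_one] using hIoc.union hIoi

lemma integrable_sub_mul_abs_sub_rpow_of_lipschitzWith {γ : ℝ} (hγ0 : 0 < γ) (hγ1 : γ < 1)
    {g : ℝ → ℝ} {K : ℝ≥0} (hg : LipschitzWith K g) {M : ℝ} (hM : ∀ y, |g y| ≤ M) (x : ℝ) :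
    Integrable (fun y => (g x - g y) * |x - y| ^ (-(1 + γ))) := by
  have hbound : ∀ y, |g x - g y| ≤ (K + 2 * M) * min 1 |x - y| := by
    intro y
    have hM0 : 0 ≤ M := (abs_nonneg _).trans (hM y)
    rcases le_total |x - y| 1 with h | h
    · have := hg.dist_le_mul x y
      rw [Real.dist_eq, Real.dist_eq] at this
      rw [min_eq_right h]
      nlinarith [abs_nonneg (x - y)]
    · rw [min_eq_left h]
      linarith [abs_sub (g x) (g y), hM x, hM y]
  have hkernel : Integrable (fun y => (K + 2 * M) * (min 1 |x - y| * |x - y| ^ (-(1 + γ)))) :=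
    ((integrable_comp_abs_of_integrableOn_Ioi
      (integrableOn_Ioi_min_one_mul_rpow hγ0 hγ1)).comp_sub_left x).const_mul _
  refine hkernel.mono' (by have := hg.continuous.measurable; fun_prop) (.of_forall fun y => ?_)
  have hw : 0 ≤ |x - y| ^ (-(1 + γ)) := by positivity
  rw [Real.norm_eq_abs, abs_mul, abs_of_nonneg hw, ← mul_assoc]
  exact mul_le_mul_of_nonneg_right (hbound y) hw

namespace SchwartzMap

variable {E F : Type*} [NormedAddCommGroup E] [NormedSpace ℝ E] [NormedAddCommGroup F]
  [NormedSpace ℝ F]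

lemma exists_lipschitzWith_s4 (f : 𝓢(E, F)) : ∃ K, LipschitzWith K f :=
  ⟨_, lipschitzWith_of_nnnorm_fderiv_le (𝕜 := ℝ) f.differentiable
    (fderivCLM ℝ E F f).toBoundedContinuousFunction.nnnorm_coe_le_nnnorm⟩

lemma integrable_sub_mul_abs_sub_rpow_s4 {γ : ℝ} (hγ0 : 0 < γ) (hγ1 : γ < 1) (f : 𝓢(ℝ, ℝ))
    (x : ℝ) : Integrable (fun y => (f x - f y) * |x - y| ^ (-(1 + γ))) :=
  have ⟨_, hf⟩ := f.exists_lipschitzWith_s4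
  integrable_sub_mul_abs_sub_rpow_of_lipschitzWith hγ0 hγ1 hf
    f.toBoundedContinuousFunction.norm_coe_le_norm x

end SchwartzMap

lemma cube_sub_cube_div_three_le_sq_mul_sub {a b : ℝ} (h : 0 ≤ 2 * a + b) :
    (1 / 3) * (a ^ 3 - b ^ 3) ≤ a ^ 2 * (a - b) := by
  nlinarith [mul_nonneg (sq_nonneg (a - b)) h]

/-- Pointwise inequality `f² Λ^γ f ≥ (1/3) Λ^γ (f³)` for `0 < γ < 1` and nonnegative
Schwartz `f`, where `I_γ g(x) = ∫ (g(x) − g(y)) |x−y|^{−1−γ} dy` is the (un-normalized)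
fractional Laplacian, the integrals converging absolutely. -/
theorem pointwise_fractional_cube (γ : ℝ) (hγ0 : 0 < γ) (hγ1 : γ < 1)
    (f : SchwartzMap ℝ ℝ) (hf : ∀ x, 0 ≤ f x) (x : ℝ) :
    Integrable (fun y : ℝ => (f x - f y) * |x - y| ^ (-(1 + γ))) ∧
    Integrable (fun y : ℝ => (f x ^ 3 - f y ^ 3) * |x - y| ^ (-(1 + γ))) ∧
    (1 / 3) * (∫ y : ℝ, (f x ^ 3 - f y ^ 3) * |x - y| ^ (-(1 + γ))) ≤
      f x ^ 2 * ∫ y : ℝ, (f x - f y) * |x - y| ^ (-(1 + γ)) := by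
  set cube : 𝓢(ℝ, ℝ) := SchwartzMap.smulLeftCLM ℝ ((f : ℝ → ℝ) ^ 2) f
  have hcube : ∀ y, cube y = f y ^ 3 := fun y => by
    rw [SchwartzMap.smulLeftCLM_apply_apply (f.hasTemperateGrowth.pow 2), Pi.pow_apply,
      smul_eq_mul, ← pow_succ]
  have hf_int := f.integrable_sub_mul_abs_sub_rpow_s4 hγ0 hγ1 x
  have hcube_int : Integrable (fun y : ℝ => (f x ^ 3 - f y ^ 3) * |x - y| ^ (-(1 + γ))) := by
    simpa only [hcube] using cube.integrable_sub_mul_abs_sub_rpow_s4 hγ0 hγ1 x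
  refine ⟨hf_int, hcube_int, ?_⟩
  rw [← integral_const_mul, ← integral_const_mul]
  refine integral_mono (hcube_int.const_mul _) (hf_int.const_mul _) fun y => ?_
  have hw : 0 ≤ |x - y| ^ (-(1 + γ)) := by positivity
  have := mul_le_mul_of_nonneg_right
    (cube_sub_cube_div_three_le_sq_mul_sub (by linarith [hf x, hf y] : 0 ≤ 2 * f x + f y)) hw
  linarith
end

section
/- Let 0 < γ < 1 and let θ : ℝ → ℝ be a Schwartz function with θ(x) ≥ 0 for all x. Then ∫_ℝ θ(x)² I_γ θ(x) dx = (1/2) ∫_ℝ ∫_ℝ (θ(x) − θ(y))² (θ(x) + θ(y)) |x−y|^{−1−γ} dy dx, and in particular ∫_ℝ θ(x)² I_γ θ(x) dx ≥ 0, where I_γ θ(x) = ∫_ℝ (θ(x) − θ(y)) |x−y|^{−1−γ} dy. -/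
/-!
Exchanging `x` and `y` turns `θ(x)² (θ(x) − θ(y))` into `θ(y)² (θ(y) − θ(x))`, and the sum of the
two is `(θ(x) − θ(y))² (θ(x) + θ(y))`; so the left side is half the symmetrized double integral,
which is nonnegative when `θ ≥ 0`. The exchange is Fubini: since `|θ(x) − θ(y)| ≤ min (L|x − y|) 2M`,
the integrand is dominated by `θ(x)²` times a kernel in `x − y` that is integrable exactly because
`0 < γ < 1` (it behaves like `|u|^(-γ)` at `0` and like `|u|^(-1-γ)` at infinity).
-/

open MeasureTheory Filter Function
open scoped NNReal SchwartzMap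

theorem integrable_min_mul_abs_rpow_neg {γ L C : ℝ} (hγ0 : 0 < γ) (hγ1 : γ < 1) (hL : 0 ≤ L)
    (hC : 0 ≤ C) : Integrable fun u : ℝ => min (L * |u|) C * |u| ^ (-(1 + γ)) := by
  set H : ℝ → ℝ := fun u => min (L * |u|) C * |u| ^ (-(1 + γ))
  have hH_nonneg (u : ℝ) : 0 ≤ H u := by positivity
  have hH_meas : AEStronglyMeasurable H := by fun_prop
  have hH_local : LocallyIntegrable H := by
    refine locallyIntegrable_of_norm_le_rpow (by simp) (C := L) (α := γ) (by simpa)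
      (ae_of_all _ fun u => ?_) hH_meas
    have hpow : |u| ^ (-γ) = |u| * |u| ^ (-(1 + γ)) := by
      rw [← Real.rpow_one_add' (abs_nonneg u) (by linarith)]; ring_nf
    rw [Real.norm_eq_abs, abs_of_nonneg (hH_nonneg u), Real.norm_eq_abs, hpow, ← mul_assoc]
    exact mul_le_mul_of_nonneg_right (min_le_left _ _) (by positivity)
  have hH_tail : H =O[atTop] fun u : ℝ => u ^ (-(1 + γ)) := by
    refine Asymptotics.IsBigO.of_bound C ?_
    filter_upwards [eventually_ge_atTop 0] with u hu
    rw [Real.norm_eq_abs, abs_of_nonneg (hH_nonneg u), Real.norm_eq_abs,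
      abs_of_nonneg (Real.rpow_nonneg hu _)]
    show min (L * |u|) C * |u| ^ (-(1 + γ)) ≤ C * u ^ (-(1 + γ))
    rw [abs_of_nonneg hu]
    exact mul_le_mul_of_nonneg_right (min_le_right _ _) (by positivity)
  exact hH_local.integrable_of_isBigO_atTop_of_norm_isNegInvariant
    (ae_of_all _ fun u => by simp [H]) hH_tail (integrableAtFilter_rpow_atTop_iff.2 (by linarith))

theorem LipschitzWith.norm_sub_le_min {α E : Type*} [PseudoMetricSpace α]
    [SeminormedAddCommGroup E] {g : α → E} {K : ℝ≥0} (hg : LipschitzWith K g) {M : ℝ}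
    (hM : ∀ x, ‖g x‖ ≤ M) (x y : α) : ‖g x - g y‖ ≤ min (K * dist x y) (2 * M) :=
  le_min (dist_eq_norm (g x) (g y) ▸ hg.dist_le_mul x y)
    ((_root_.norm_sub_le _ _).trans (by linarith [hM x, hM y]))

theorem SchwartzMap.lipschitzWith {E F : Type*} [NormedAddCommGroup E] [NormedSpace ℝ E]
    [NormedAddCommGroup F] [NormedSpace ℝ F] (f : 𝓢(E, F)) :
    LipschitzWith ‖(fderivCLM ℝ E F f).toBoundedContinuousFunction‖₊ f :=
  lipschitzWith_of_nnnorm_fderiv_le f.differentiable fun x =>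
    (fderivCLM ℝ E F f).toBoundedContinuousFunction.nnnorm_coe_le_nnnorm x

theorem integrable_mul_sub_mul_abs_sub_rpow {f g : ℝ → ℝ} {K : ℝ≥0} {M γ : ℝ} (hγ0 : 0 < γ)
    (hγ1 : γ < 1) (hf : Integrable f) (hg : LipschitzWith K g) (hM : ∀ x, |g x| ≤ M) :
    Integrable (fun p : ℝ × ℝ => f p.1 * ((g p.1 - g p.2) * |p.1 - p.2| ^ (-(1 + γ))))
      (volume.prod volume) := by
  set H : ℝ → ℝ := fun u => min (K * |u|) (2 * M) * |u| ^ (-(1 + γ))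
  have hH : Integrable H := integrable_min_mul_abs_rpow_neg hγ0 hγ1 K.coe_nonneg
    (by linarith [abs_nonneg (g 0), hM 0])
  have hdom : Integrable (fun p : ℝ × ℝ => |f p.1| * H (p.1 - p.2)) (volume.prod volume) :=
    (hf.abs.convolution_integrand (ContinuousLinearMap.mul ℝ ℝ) hH).swap.congr
      (ae_of_all _ fun p => by simp [H, abs_sub_comm])
  have hcont := hg.continuous
  refine hdom.mono' (hf.1.comp_fst.mul (Measurable.aestronglyMeasurable (by fun_prop)))
    (ae_of_all _ fun p => ?_)
  rw [norm_mul, norm_mul, Real.norm_eq_abs, Real.norm_eq_abs, Real.norm_eq_abs,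
    abs_of_nonneg (Real.rpow_nonneg (abs_nonneg _) _)]
  refine mul_le_mul_of_nonneg_left (mul_le_mul_of_nonneg_right ?_ (by positivity)) (abs_nonneg _)
  simpa only [Real.norm_eq_abs, Real.dist_eq] using hg.norm_sub_le_min hM p.1 p.2

theorem integral_integral_eq_half_integral_integral_add_swap {α : Type*} [MeasurableSpace α]
    {μ : Measure α} [SFinite μ] {F : α → α → ℝ} (hF : Integrable (uncurry F) (μ.prod μ)) :
    ∫ x, ∫ y, F x y ∂μ ∂μ = (1 / 2) * ∫ x, ∫ y, (F x y + F y x) ∂μ ∂μ := by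
  have hFswap : Integrable (fun z : α × α => F z.2 z.1) (μ.prod μ) := hF.swap
  have hswap : ∫ z, F z.2 z.1 ∂μ.prod μ = ∫ z, F z.1 z.2 ∂μ.prod μ :=
    integral_prod_swap fun z : α × α => F z.1 z.2
  rw [integral_integral hF, integral_integral (hF.add hFswap),
    integral_add (f := fun z : α × α => F z.1 z.2) hF hFswap, hswap]
  ring

/-- For `0 < γ < 1` and a nonnegative Schwartz function `θ`,
`∫ θ² I_γ θ dx = (1/2) ∫∫ (θ(x) − θ(y))² (θ(x) + θ(y)) |x−y|^{−1−γ} dy dx ≥ 0`,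
where `I_γ θ(x) = ∫ (θ(x) − θ(y)) |x−y|^{−1−γ} dy`. -/
theorem integral_sq_fractional_nonneg (γ : ℝ) (hγ0 : 0 < γ) (hγ1 : γ < 1)
    (θ : SchwartzMap ℝ ℝ) (hθ : ∀ x, 0 ≤ θ x) :
    (∫ x : ℝ, θ x ^ 2 * ∫ y : ℝ, (θ x - θ y) * |x - y| ^ (-(1 + γ))) =
      (1 / 2) * ∫ x : ℝ, ∫ y : ℝ,
        (θ x - θ y) ^ 2 * (θ x + θ y) * |x - y| ^ (-(1 + γ)) ∧
    0 ≤ ∫ x : ℝ, θ x ^ 2 * ∫ y : ℝ, (θ x - θ y) * |x - y| ^ (-(1 + γ)) := by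
  have hF : Integrable (uncurry fun x y : ℝ => θ x ^ 2 * ((θ x - θ y) * |x - y| ^ (-(1 + γ))))
      (volume.prod volume) :=
    integrable_mul_sub_mul_abs_sub_rpow hγ0 hγ1 (θ.memLp 2).integrable_sq θ.lipschitzWith
      fun x => by simpa using θ.toBoundedContinuousFunction.norm_coe_le_norm x
  have hsymm : (∫ x : ℝ, θ x ^ 2 * ∫ y : ℝ, (θ x - θ y) * |x - y| ^ (-(1 + γ))) =
      (1 / 2) * ∫ x : ℝ, ∫ y : ℝ, (θ x - θ y) ^ 2 * (θ x + θ y) * |x - y| ^ (-(1 + γ)) := by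
    calc _ = ∫ x : ℝ, ∫ y : ℝ, θ x ^ 2 * ((θ x - θ y) * |x - y| ^ (-(1 + γ))) := by
          simp_rw [← integral_const_mul]
      _ = _ := integral_integral_eq_half_integral_integral_add_swap hF
      _ = _ := by
          congr! 5 with x y
          rw [abs_sub_comm y x]
          ring
  refine ⟨hsymm, hsymm ▸ mul_nonneg one_half_pos.le
    (integral_nonneg fun x => integral_nonneg fun y => ?_)⟩
  have := hθ x
  have := hθ y
  positivity
end

section
/- Let 0 < β < 1, 0 < s < 1, and w_β(x) = (1 + |x|²)^{−β/2}. Then for every x ∈ ℝ the integral ∫_ℝ (w_β(x) − w_β(y)) |x−y|^{−1−s} dy converges absolutely, and there exists a constant C = C(s, β) > 0 such that for all x ∈ ℝ, | ∫_ℝ (w_β(x) − w_β(y)) |x−y|^{−1−s} dy | ≤ C · w_β(x). -/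
/-!
Write `⟨x⟩ = √(1 + x²)`, so that `w_β = ⟨·⟩^{-β}`, and `ρ = ⟨x⟩ / 2`. Since `⟨·⟩` is
1-Lipschitz, `⟨y⟩ ≥ ρ` when `|x - y| < ρ`, and there the mean value theorem gives
`|w_β(x) - w_β(y)| ≤ β ρ^{-β-1} |x - y|`, whose product with `|x - y|^{-1-s}` is integrable near
`y = x` because `s < 1`. When `|x - y| ≥ ρ` we use `|w_β(x) - w_β(y)| ≤ max (w_β(x), w_β(y))`,
with `w_β(y) ≤ |y|^{-β}`, integrable near `0` because `β < 1`, and `w_β(y) ≤ w_β(x)` for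
`|y| ≥ ⟨x⟩`. Each piece of the resulting majorant integrates to a multiple of `ρ^{-β-s}`,
which is at most `2^{β+s} w_β(x)`.
-/

open MeasureTheory

/-- The weight `w_β(x) = (1 + |x|²)^{−β/2}`. -/
noncomputable def wbeta (β x : ℝ) : ℝ := (1 + x ^ 2) ^ (-(β / 2))

open Real Set

noncomputable def japaneseBracket (x : ℝ) : ℝ := √(1 + x ^ 2)

lemma one_le_japaneseBracket (x : ℝ) : 1 ≤ japaneseBracket x :=
  one_le_sqrt.mpr (by nlinarith)

lemma abs_le_japaneseBracket (x : ℝ) : |x| ≤ japaneseBracket x := by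
  rw [← sqrt_sq_eq_abs]
  exact sqrt_le_sqrt (by linarith)

lemma japaneseBracket_pos (x : ℝ) : 0 < japaneseBracket x :=
  one_pos.trans_le (one_le_japaneseBracket x)

lemma abs_japaneseBracket_sub_le (x y : ℝ) :
    |japaneseBracket x - japaneseBracket y| ≤ |x - y| := by
  set a := japaneseBracket x
  set b := japaneseBracket y
  have ha : a ^ 2 = 1 + x ^ 2 := sq_sqrt (by positivity)
  have hb : b ^ 2 = 1 + y ^ 2 := sq_sqrt (by positivity)
  have hab : 0 ≤ a * b := mul_nonneg (sqrt_nonneg _) (sqrt_nonneg _)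
  -- `(ab)² = (1 + x²)(1 + y²) ≥ (1 + xy)²`, so `(a - b)² ≤ (x - y)²`.
  refine sq_le_sq.mp ?_
  nlinarith [sq_nonneg (a * b - 1 - x * y), sq_nonneg (x - y)]

lemma wbeta_eq_japaneseBracket_rpow (β x : ℝ) : wbeta β x = japaneseBracket x ^ (-β) := by
  rw [wbeta, japaneseBracket, show -(β / 2) = -β / 2 by ring,
    rpow_div_two_eq_sqrt _ (by positivity)]

lemma wbeta_le_abs_rpow {β : ℝ} (hβ : 0 ≤ β) {y : ℝ} (hy : y ≠ 0) : wbeta β y ≤ |y| ^ (-β) := by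
  rw [wbeta_eq_japaneseBracket_rpow]
  exact rpow_le_rpow_of_nonpos (abs_pos.mpr hy) (abs_le_japaneseBracket y) (by linarith)

lemma abs_rpow_neg_sub_rpow_neg_le {β m a b : ℝ} (hβ : 0 ≤ β) (hm : 0 < m) (ha : m ≤ a)
    (hb : m ≤ b) : |a ^ (-β) - b ^ (-β)| ≤ β * m ^ (-β - 1) * |a - b| := by
  have hderiv : ∀ t ∈ Ici m, HasDerivWithinAt (· ^ (-β)) (-β * t ^ (-β - 1)) (Ici m) t :=
    fun t ht => (hasDerivAt_rpow_const (Or.inl (hm.trans_le ht).ne')).hasDerivWithinAt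
  have hbound : ∀ t ∈ Ici m, ‖-β * t ^ (-β - 1)‖ ≤ β * m ^ (-β - 1) := fun t (ht : m ≤ t) => by
    rw [norm_mul, norm_neg, norm_of_nonneg hβ, norm_of_nonneg (rpow_nonneg (hm.le.trans ht) _)]
    exact mul_le_mul_of_nonneg_left (rpow_le_rpow_of_nonpos hm ht (by linarith)) hβ
  simpa only [norm_eq_abs] using
    (convex_Ici m).norm_image_sub_le_of_norm_hasDerivWithin_le hderiv hbound hb ha

lemma integrable_comp_abs {g : ℝ → ℝ} (hg : IntegrableOn g (Ioi 0)) :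
    Integrable fun t => g |t| := by
  have hIoi : IntegrableOn (fun t => g |t|) (Ioi 0) :=
    hg.congr_fun (fun t (ht : 0 < t) => by rw [abs_of_pos ht]) measurableSet_Ioi
  have hIic : IntegrableOn (fun t => g |t|) (Iic 0) := by
    have hneg : MeasurableEmbedding fun t : ℝ => -t := (Homeomorph.neg ℝ).measurableEmbedding
    rw [← Measure.map_neg_eq_self (volume : Measure ℝ), hneg.integrableOn_map_iff]
    simp_rw [Function.comp_def, abs_neg, neg_preimage, neg_Iic, neg_zero]
    exact Iff.mpr integrableOn_Ici_iff_integrableOn_Ioi hIoi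
  have h := hIic.union hIoi
  rwa [Iic_union_Ioi, integrableOn_univ] at h

lemma integrable_comp_abs_sub {g : ℝ → ℝ} (hg : IntegrableOn g (Ioi 0)) (a : ℝ) :
    Integrable fun y => g |a - y| :=
  (integrable_comp_abs hg).comp_sub_left a

lemma integral_comp_abs_sub (g : ℝ → ℝ) (a : ℝ) :
    ∫ y, g |a - y| = 2 * ∫ t in Ioi 0, g t := by
  rw [integral_sub_left_eq_self (fun t => g |t|), integral_comp_abs]

section Indicator

variable {c p : ℝ}

lemma integrableOn_Ioi_indicator_Iio_rpow (hc : 0 < c) (hp : -1 < p) :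
    IntegrableOn ((Iio c).indicator (· ^ p)) (Ioi 0) := by
  rw [IntegrableOn, integrable_indicator_iff measurableSet_Iio, IntegrableOn,
    Measure.restrict_restrict measurableSet_Iio, inter_comm, Ioi_inter_Iio]
  exact ((intervalIntegrable_iff_integrableOn_Ioc_of_le hc.le).mp
    (intervalIntegral.intervalIntegrable_rpow' hp)).mono_set Ioo_subset_Ioc_self

lemma setIntegral_Ioi_indicator_Iio_rpow (hc : 0 < c) (hp : -1 < p) :
    ∫ t in Ioi 0, (Iio c).indicator (· ^ p) t = c ^ (p + 1) / (p + 1) := by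
  rw [integral_indicator measurableSet_Iio, Measure.restrict_restrict measurableSet_Iio,
    inter_comm, Ioi_inter_Iio, ← integral_Ioc_eq_integral_Ioo,
    ← intervalIntegral.integral_of_le hc.le, integral_rpow (Or.inl hp),
    zero_rpow (by linarith), sub_zero]

lemma integrableOn_Ioi_indicator_Ici_rpow (hc : 0 < c) (hp : p < -1) :
    IntegrableOn ((Ici c).indicator (· ^ p)) (Ioi 0) := by
  rw [IntegrableOn, integrable_indicator_iff measurableSet_Ici, IntegrableOn,
    Measure.restrict_restrict measurableSet_Ici, inter_eq_left.mpr (Ici_subset_Ioi.mpr hc)]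
  exact Iff.mpr integrableOn_Ici_iff_integrableOn_Ioi (integrableOn_Ioi_rpow_of_lt hp hc)

lemma setIntegral_Ioi_indicator_Ici_rpow (hc : 0 < c) (hp : p < -1) :
    ∫ t in Ioi 0, (Ici c).indicator (· ^ p) t = -c ^ (p + 1) / (p + 1) := by
  rw [integral_indicator measurableSet_Ici, Measure.restrict_restrict measurableSet_Ici,
    inter_eq_left.mpr (Ici_subset_Ioi.mpr hc), integral_Ici_eq_integral_Ioi,
    integral_Ioi_rpow_of_lt hp hc]

end Indicator

lemma wbeta_nonneg (β x : ℝ) : 0 ≤ wbeta β x := by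
  rw [wbeta_eq_japaneseBracket_rpow]
  exact rpow_nonneg (japaneseBracket_pos x).le _

lemma abs_wbeta_sub_le_of_abs_sub_lt {β x y : ℝ} (hβ : 0 ≤ β)
    (h : |x - y| < japaneseBracket x / 2) :
    |wbeta β x - wbeta β y| ≤ β * (japaneseBracket x / 2) ^ (-β - 1) * |x - y| := by
  have hr := japaneseBracket_pos x
  have hlip := abs_japaneseBracket_sub_le x y
  have hy : japaneseBracket x / 2 ≤ japaneseBracket y := by
    linarith [le_abs_self (japaneseBracket x - japaneseBracket y)]
  rw [wbeta_eq_japaneseBracket_rpow, wbeta_eq_japaneseBracket_rpow]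
  exact (abs_rpow_neg_sub_rpow_neg_le hβ (by positivity) (by linarith) hy).trans
    (mul_le_mul_of_nonneg_left hlip (by positivity))

lemma abs_wbeta_sub_le {β x y : ℝ} (hβ : 0 ≤ β) (hy : y ≠ 0) :
    |wbeta β x - wbeta β y| ≤
      (japaneseBracket x / 2) ^ (-β) + (Iio (japaneseBracket x)).indicator (· ^ (-β)) |y| := by
  set r := japaneseBracket x
  have hr : 0 < r := japaneseBracket_pos x
  have hrβ : r ^ (-β) ≤ (r / 2) ^ (-β) :=
    rpow_le_rpow_of_nonpos (by positivity) (by linarith) (by linarith)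
  have hind : 0 ≤ (Iio r).indicator (· ^ (-β)) |y| :=
    indicator_nonneg (fun t _ => rpow_nonneg (abs_nonneg y) _) _
  have hwx : wbeta β x ≤ r ^ (-β) := (wbeta_eq_japaneseBracket_rpow β x).le
  -- `w_β(y) ≤ |y|^{-β}`, which is at most `⟨x⟩^{-β}` once `|y| ≥ ⟨x⟩`.
  have hwy : wbeta β y ≤ (r / 2) ^ (-β) + (Iio r).indicator (· ^ (-β)) |y| := by
    by_cases hyr : |y| < r
    · rw [indicator_of_mem (mem_Iio.mpr hyr)]
      linarith [wbeta_le_abs_rpow hβ hy, rpow_nonneg (half_pos hr).le (-β)]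
    · calc wbeta β y ≤ |y| ^ (-β) := wbeta_le_abs_rpow hβ hy
        _ ≤ r ^ (-β) := rpow_le_rpow_of_nonpos hr (not_lt.mp hyr) (by linarith)
        _ ≤ _ := by linarith
  exact abs_sub_le_of_nonneg_of_le (wbeta_nonneg β x) (by linarith) (wbeta_nonneg β y) hwy

noncomputable def wbetaMajorant (β s ρ x y : ℝ) : ℝ :=
  β * ρ ^ (-β - 1) * (Iio ρ).indicator (· ^ (-s)) |x - y|
    + ρ ^ (-β) * (Ici ρ).indicator (· ^ (-(1 + s))) |x - y|
    + ρ ^ (-(1 + s)) * (Iio (2 * ρ)).indicator (· ^ (-β)) |y|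

lemma abs_wbeta_kernel_le_wbetaMajorant {β s x y : ℝ} (hβ : 0 ≤ β) (hs : 0 < s)
    (hy : y ≠ 0) :
    |(wbeta β x - wbeta β y) * |x - y| ^ (-(1 + s))|
      ≤ wbetaMajorant β s (japaneseBracket x / 2) x y := by
  set ρ := japaneseBracket x / 2
  set d := |x - y|
  have hρ : 0 < ρ := half_pos (japaneseBracket_pos x)
  have hd : 0 ≤ d := abs_nonneg _
  have hnonneg : ∀ (S : Set ℝ) (p t : ℝ), 0 ≤ t → 0 ≤ S.indicator (· ^ p) t :=
    fun S p t ht => indicator_nonneg (fun u _ => rpow_nonneg ht p) t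
  have h1 := hnonneg (Iio ρ) (-s) d hd
  have h2 := hnonneg (Ici ρ) (-(1 + s)) d hd
  have h3 := hnonneg (Iio (2 * ρ)) (-β) |y| (abs_nonneg y)
  rw [abs_mul, abs_of_nonneg (rpow_nonneg hd _), wbetaMajorant]
  by_cases hnear : d < ρ
  · rw [indicator_of_mem (mem_Iio.mpr hnear)]
    have hdd : d * d ^ (-(1 + s)) = d ^ (-s) := by
      rw [← rpow_one_add' hd (by linarith)]; ring_nf
    calc |wbeta β x - wbeta β y| * d ^ (-(1 + s))
        ≤ β * ρ ^ (-β - 1) * d * d ^ (-(1 + s)) :=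
          mul_le_mul_of_nonneg_right (abs_wbeta_sub_le_of_abs_sub_lt hβ hnear)
            (rpow_nonneg hd _)
      _ = β * ρ ^ (-β - 1) * d ^ (-s) := by rw [mul_assoc, hdd]
      _ ≤ _ := by nlinarith [rpow_nonneg hρ.le (-β), rpow_nonneg hρ.le (-(1 + s))]
  · rw [not_lt] at hnear
    rw [show 2 * ρ = japaneseBracket x by ring] at h3 ⊢
    rw [indicator_of_mem (mem_Ici.mpr hnear), indicator_of_notMem (by simpa using hnear),
      mul_zero, zero_add]
    have hdρ : d ^ (-(1 + s)) ≤ ρ ^ (-(1 + s)) := rpow_le_rpow_of_nonpos hρ hnear (by linarith)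
    calc |wbeta β x - wbeta β y| * d ^ (-(1 + s))
        ≤ (ρ ^ (-β) + (Iio (japaneseBracket x)).indicator (· ^ (-β)) |y|) * d ^ (-(1 + s)) :=
          mul_le_mul_of_nonneg_right (abs_wbeta_sub_le hβ hy) (rpow_nonneg hd _)
      _ ≤ _ := by nlinarith

section Majorant

variable {β s ρ : ℝ}

lemma integrable_wbetaMajorant (hρ : 0 < ρ) (hβ : β < 1) (hs0 : 0 < s) (hs1 : s < 1) (x : ℝ) :
    Integrable (wbetaMajorant β s ρ x) := by
  have hI1 := integrable_comp_abs_sub (integrableOn_Ioi_indicator_Iio_rpow hρ (p := -s)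
    (by linarith)) x
  have hI2 := integrable_comp_abs_sub (integrableOn_Ioi_indicator_Ici_rpow hρ (p := -(1 + s))
    (by linarith)) x
  have hI3 := integrable_comp_abs (integrableOn_Ioi_indicator_Iio_rpow (c := 2 * ρ) (p := -β)
    (by linarith) (by linarith))
  exact ((hI1.const_mul _).add (hI2.const_mul _)).add (hI3.const_mul _)

lemma integral_wbetaMajorant_le (hρ : 0 < ρ) (hβ0 : 0 ≤ β) (hβ1 : β < 1) (hs0 : 0 < s)
    (hs1 : s < 1) (x : ℝ) :
    ∫ y, wbetaMajorant β s ρ x y ≤ (2 * β / (1 - s) + 2 / s + 4 / (1 - β)) * ρ ^ (-(β + s)) := by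
  have hI1 := (integrable_comp_abs_sub (integrableOn_Ioi_indicator_Iio_rpow hρ (p := -s)
    (by linarith)) x).const_mul (β * ρ ^ (-β - 1))
  have hI2 := (integrable_comp_abs_sub (integrableOn_Ioi_indicator_Ici_rpow hρ (p := -(1 + s))
    (by linarith)) x).const_mul (ρ ^ (-β))
  have hI3 := (integrable_comp_abs (integrableOn_Ioi_indicator_Iio_rpow (c := 2 * ρ) (p := -β)
    (by linarith) (by linarith))).const_mul (ρ ^ (-(1 + s)))
  have hvalue : ∫ y, wbetaMajorant β s ρ x y =
      2 * β / (1 - s) * (ρ ^ (-β - 1) * ρ ^ (-s + 1)) + 2 / s * (ρ ^ (-β) * ρ ^ (-(1 + s) + 1))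
        + 2 / (1 - β) * (ρ ^ (-(1 + s)) * (2 * ρ) ^ (-β + 1)) := by
    simp only [wbetaMajorant]
    rw [integral_add (by exact hI1.add hI2) hI3, integral_add hI1 hI2, integral_const_mul,
      integral_const_mul, integral_const_mul, integral_comp_abs_sub, integral_comp_abs_sub,
      integral_comp_abs, setIntegral_Ioi_indicator_Iio_rpow hρ (by linarith),
      setIntegral_Ioi_indicator_Ici_rpow hρ (by linarith),
      setIntegral_Ioi_indicator_Iio_rpow (by linarith) (by linarith)]
    ring
  have hexp : ∀ a b, a + b = -(β + s) → ρ ^ a * ρ ^ b = ρ ^ (-(β + s)) := fun a b h => by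
    rw [← rpow_add hρ, h]
  have h3 : ρ ^ (-(1 + s)) * (2 * ρ) ^ (-β + 1) ≤ 2 * ρ ^ (-(β + s)) := by
    rw [mul_rpow zero_le_two hρ.le, mul_left_comm, hexp _ _ (by ring)]
    gcongr
    exact rpow_le_self_of_one_le one_le_two (by linarith)
  rw [hvalue, hexp _ _ (by ring), hexp _ _ (by ring)]
  have hβ1' : 0 < 1 - β := by linarith
  calc _ ≤ 2 * β / (1 - s) * ρ ^ (-(β + s)) + 2 / s * ρ ^ (-(β + s))
        + 2 / (1 - β) * (2 * ρ ^ (-(β + s))) := by gcongr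
    _ = _ := by ring

end Majorant

section Kernel

variable {β s : ℝ}

lemma ae_abs_wbeta_kernel_le_wbetaMajorant (hβ : 0 ≤ β) (hs : 0 < s) (x : ℝ) :
    ∀ᵐ y, |(wbeta β x - wbeta β y) * |x - y| ^ (-(1 + s))|
      ≤ wbetaMajorant β s (japaneseBracket x / 2) x y :=
  (volume.ae_ne 0).mono fun _ hy => abs_wbeta_kernel_le_wbetaMajorant hβ hs hy

lemma integrable_wbeta_kernel (hβ0 : 0 ≤ β) (hβ1 : β < 1) (hs0 : 0 < s) (hs1 : s < 1)
    (x : ℝ) : Integrable fun y => (wbeta β x - wbeta β y) * |x - y| ^ (-(1 + s)) :=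
  (integrable_wbetaMajorant (half_pos (japaneseBracket_pos x)) hβ1 hs0 hs1 x).mono'
    (Measurable.aestronglyMeasurable (by unfold wbeta; fun_prop))
    (ae_abs_wbeta_kernel_le_wbetaMajorant hβ0 hs0 x)

lemma integral_abs_wbeta_kernel_le (hβ0 : 0 ≤ β) (hβ1 : β < 1) (hs0 : 0 < s) (hs1 : s < 1)
    (x : ℝ) :
    ∫ y, |(wbeta β x - wbeta β y) * |x - y| ^ (-(1 + s))|
      ≤ (2 * β / (1 - s) + 2 / s + 4 / (1 - β)) * (japaneseBracket x / 2) ^ (-(β + s)) :=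
  (integral_mono_ae (integrable_wbeta_kernel hβ0 hβ1 hs0 hs1 x).abs
    (integrable_wbetaMajorant (half_pos (japaneseBracket_pos x)) hβ1 hs0 hs1 x)
    (ae_abs_wbeta_kernel_le_wbetaMajorant hβ0 hs0 x)).trans
    (integral_wbetaMajorant_le (half_pos (japaneseBracket_pos x)) hβ0 hβ1 hs0 hs1 x)

end Kernel

lemma half_japaneseBracket_rpow_le {β s : ℝ} (hs : 0 ≤ s) (x : ℝ) :
    (japaneseBracket x / 2) ^ (-(β + s)) ≤ 2 ^ (β + s) * wbeta β x := by
  have hr := one_le_japaneseBracket x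
  rw [div_rpow (by linarith) zero_le_two, rpow_neg zero_le_two, div_inv_eq_mul, mul_comm,
    wbeta_eq_japaneseBracket_rpow]
  gcongr
  linarith

/-- Pointwise bound `|Λ^s w_β(x)| ≤ C w_β(x)` for `0 < β < 1` and `0 < s < 1`, where
`Λ^s` is realized (up to a positive normalizing constant) by the absolutely convergent
integral `∫ (w_β(x) − w_β(y)) |x−y|^{−1−s} dy`. -/
theorem wbeta_fractional_bound (β s : ℝ) (hβ0 : 0 < β) (hβ1 : β < 1)
    (hs0 : 0 < s) (hs1 : s < 1) :
    (∀ x : ℝ, Integrable (fun y : ℝ => (wbeta β x - wbeta β y) * |x - y| ^ (-(1 + s)))) ∧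
    ∃ C > 0, ∀ x : ℝ,
      |∫ y : ℝ, (wbeta β x - wbeta β y) * |x - y| ^ (-(1 + s))| ≤ C * wbeta β x := by
  set K := 2 * β / (1 - s) + 2 / s + 4 / (1 - β)
  have hK : 0 < K := by
    have := sub_pos.2 hs1
    have := sub_pos.2 hβ1
    positivity
  refine ⟨integrable_wbeta_kernel hβ0.le hβ1 hs0 hs1, K * 2 ^ (β + s), by positivity,
    fun x => ?_⟩
  calc |∫ y, (wbeta β x - wbeta β y) * |x - y| ^ (-(1 + s))|
      ≤ ∫ y, |(wbeta β x - wbeta β y) * |x - y| ^ (-(1 + s))| := abs_integral_le_integral_abs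
    _ ≤ K * (japaneseBracket x / 2) ^ (-(β + s)) :=
      integral_abs_wbeta_kernel_le hβ0.le hβ1 hs0 hs1 x
    _ ≤ K * (2 ^ (β + s) * wbeta β x) := by gcongr; exact half_japaneseBracket_rpow_le hs0.le x
    _ = K * 2 ^ (β + s) * wbeta β x := by ring
end
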